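/- arXiv:1801.06947 — 2 statements merged into one kernel-verified Lean document; each statement's English description precedes it below -/
import Mathlib

section
/- Let g = π_1^{c_1}⋯π_n^{c_n} ∈ G_n and let λ be a partition with m parts, each part at most n − k. Then the total degree of b̃_{(g,λ)} := b̃_g · y_{S_1}^r⋯y_{S_m}^r (where S_i = {π_1,…,π_{λ_i}}) equals c_1 + r·(m + des(g)). Consequently, deg(b̃_{(g,λ)}) < kr if and only if m ≤ k − des(g) − 1. -/
/-!
Every prefix `T_i`, and every `S_j` since the parts of `λ` are positive, is nonempty, so
`b̃_{(g,λ)}` is a nonzero monomial of degree `Σ m_i + r m`. The colour differences in the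
`m_i` telescope to `c_1`, leaving `Σ m_i = c_1 + r·des(g)`. Since `0 ≤ c_1 < r`, the bound
`c_1 + r(m + des(g)) < kr` is equivalent to `m + des(g) < k`.
-/

open scoped Classical
open MvPolynomial Finset

noncomputable section

/-- Nonempty subsets of `[n]`, the index set of the variables `y_S`. -/
abbrev NES (n : ℕ) := {S : Finset (Fin n) // S.Nonempty}

/-- The polynomial ring `ℂ[y_S]`. -/
abbrev YRing (n : ℕ) := MvPolynomial (NES n) ℂ

/-- The polynomial ring `ℂ[x_1, …, x_n]`. -/
abbrev XRing (n : ℕ) := MvPolynomial (Fin n) ℂ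

/-- The variable `y_F`, with junk value `1` when `F = ∅`. -/
def Yv {n : ℕ} (F : Finset (Fin n)) : YRing n :=
  if h : F.Nonempty then X ⟨F, h⟩ else 1

/-- `θ_i = Σ_{|S| = i} y_S^r`. -/
def theta (n r i : ℕ) : YRing n :=
  ∑ S ∈ univ.filter (fun S : NES n => S.1.card = i), X S ^ r

/-- Stanley–Reisner generators `y_S y_T` for incomparable `S, T`. -/
def srSet (n : ℕ) : Set (YRing n) :=
  {p | ∃ S T : NES n, ¬ S.1 ⊆ T.1 ∧ ¬ T.1 ⊆ S.1 ∧ p = X S * X T}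

/-- The generators `θ_{n-k+1}, …, θ_n`. -/
def thetaSet (n k r : ℕ) : Set (YRing n) :=
  {p | ∃ i : ℕ, n - k + 1 ≤ i ∧ i ≤ n ∧ p = theta n r i}

/-- Products `y_{S_1} ⋯ y_{S_m}` over multichains `S_1 ⊆ ⋯ ⊆ S_m` of length `m`. -/
def chainSet (n m : ℕ) : Set (YRing n) :=
  {p | ∃ S : Fin m → NES n, (∀ i j : Fin m, i ≤ j → (S i).1 ⊆ (S j).1) ∧ p = ∏ i, X (S i)}

def SRideal (n : ℕ) : Ideal (YRing n) := Ideal.span (srSet n)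

def STideal (n k r : ℕ) : Ideal (YRing n) := Ideal.span (srSet n ∪ thetaSet n k r)

/-- The ideal `𝓙_{n,k}`. -/
def Jideal (n k r : ℕ) : Ideal (YRing n) :=
  Ideal.span (srSet n ∪ thetaSet n k r ∪ chainSet n (k * r))

/-- The ideal `𝓘_{n,k}`. -/
def Iideal (n k r : ℕ) : Ideal (YRing n) :=
  Ideal.span (srSet n ∪ thetaSet n k r ∪ chainSet n (k * r + 1))

/-- An `r`-colored word of length `m` on distinct letters from `[n]`. -/
structure CWord (n r m : ℕ) where
  letter : Fin m → Fin n
  inj : Function.Injective letter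
  color : Fin m → Fin r

/-- `r`-colored permutations of `[n]`, i.e. the group `G(r,1,n)` as a set. -/
abbrev CPerm (n r : ℕ) := CWord n r n

/-- The order on colored letters: `(a,c) < (b,d)` iff `c > d`, or `c = d` and `a < b`. -/
def colLt {n r : ℕ} (a b : Fin n × Fin r) : Prop :=
  b.2 < a.2 ∨ (a.2 = b.2 ∧ a.1 < b.1)

/-- The descent set of a colored word (0-indexed positions). -/
def DesSet {n r m : ℕ} (w : CWord n r m) : Finset (Fin m) :=
  univ.filter fun i => ∃ j : Fin m, (j : ℕ) = (i : ℕ) + 1 ∧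
    colLt (w.letter j, w.color j) (w.letter i, w.color i)

def desNum {n r m : ℕ} (w : CWord n r m) : ℕ := (DesSet w).card

/-- `maj(w) = Σ colors + r · Σ_{i ∈ Des(w)} i` (1-based positions). -/
def majW {n r m : ℕ} (w : CWord n r m) : ℕ :=
  (∑ i, (w.color i : ℕ)) + r * ∑ i ∈ DesSet w, ((i : ℕ) + 1)

/-- The set of the first `t` letters of `w`. -/
def pref {n r m : ℕ} (w : CWord n r m) (t : ℕ) : Finset (Fin n) :=
  univ.filter fun a => ∃ l : Fin m, (l : ℕ) < t ∧ w.letter l = a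

/-- The exponent `m_i = c_i - c_{i+1} + r·[i ∈ Des(g)]` (and `m_last = c_last`). -/
def mExp {n r m : ℕ} (w : CWord n r m) (i : Fin m) : ℕ :=
  (((w.color i : ℤ) - (if h : (i : ℕ) + 1 < m then (w.color ⟨(i : ℕ) + 1, h⟩ : ℤ) else 0))
    + (if i ∈ DesSet w then (r : ℤ) else 0)).toNat

/-- The descent monomial `b̃_w`. -/
def btw {n r m : ℕ} (w : CWord n r m) : YRing n :=
  ∏ i : Fin m, Yv (pref w ((i : ℕ) + 1)) ^ mExp w i

/-- `b̃_{(g,d)} = b̃_g · Π_i y_{T_i}^{r d_i}`. -/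
def btd {n r : ℕ} (g : CPerm n r) (d : Fin n → ℕ) : YRing n :=
  btw g * ∏ i : Fin n, Yv (pref g ((i : ℕ) + 1)) ^ (r * d i)

/-- `b̃_{(w,λ)} = b̃_w · Π_j y_{S_{λ_j}}^r` for a list `λ` of parts. -/
def btl {n r m : ℕ} (w : CWord n r m) (lam : List ℕ) : YRing n :=
  btw w * (lam.map fun p => Yv (pref w p) ^ r).prod

/-- `r`-colored ordered set partitions of `[n]` with `k` blocks, encoded as pairs `(g, λ)`. -/
structure OPIdx (n k r : ℕ) where
  g : CPerm n r
  lam : List ℕ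
  sorted : lam.Pairwise (· ≥ ·)
  pos : ∀ p ∈ lam, 1 ≤ p
  parts_le : ∀ p ∈ lam, p ≤ n - k
  len : lam.length + desNum g + 1 ≤ k

def btOP {n k r : ℕ} (o : OPIdx n k r) : YRing n := btl o.g o.lam

/-- `k`-dimensional `G_n`-faces, encoded as triples `(Z, w, λ)`. -/
structure FIdx (n k r : ℕ) where
  Z : Finset (Fin n)
  cardZ : Z.card ≤ n - k
  w : CWord n r (n - Z.card)
  mem : ∀ j, w.letter j ∉ Z
  lam : List ℕ
  sorted : lam.Pairwise (· ≥ ·)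
  pos : ∀ p ∈ lam, 1 ≤ p
  parts_le : ∀ p ∈ lam, p ≤ n - Z.card - k
  len : lam.length + desNum w + 1 ≤ k

/-- The monomial `b̃_{(Z,g,λ)}`. -/
def btF {n k r : ℕ} (f : FIdx n k r) : YRing n :=
  Yv f.Z ^ (k * r - (btl f.w f.lam).totalDegree) *
    ((∏ i : Fin (n - f.Z.card), Yv (pref f.w ((i : ℕ) + 1) ∪ f.Z) ^ mExp f.w i) *
      (f.lam.map fun p => Yv (pref f.w p ∪ f.Z) ^ r).prod)

/-- The transfer map `φ : ℂ[y_S] → ℂ[x_n]`, `y_S ↦ Π_{i ∈ S} x_i`. -/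
def phi (n : ℕ) : YRing n →ₐ[ℂ] XRing n := aeval fun S : NES n => ∏ i ∈ S.1, X i

/-- An element of `G(r,1,n)`: a permutation together with `r`-th roots of unity. -/
structure GElem (n r : ℕ) where
  perm : Equiv.Perm (Fin n)
  scalar : Fin n → ℂ
  root : ∀ i, scalar i ^ r = 1

/-- The action of `G(r,1,n)` on `ℂ[x_n]` by linear substitution. -/
def actX {n r : ℕ} (g : GElem n r) : XRing n →ₐ[ℂ] XRing n :=
  aeval fun i => g.scalar i • X (g.perm i)

/-- The action of `G(r,1,n)` on `ℂ[y_S]`, `g · y_S = α · y_{g(S)}`. -/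
def actY {n r : ℕ} (g : GElem n r) : YRing n →ₐ[ℂ] YRing n :=
  aeval fun S : NES n =>
    (∏ i ∈ S.1, g.scalar i) • X (⟨S.1.image g.perm, S.2.image _⟩ : NES n)

/-- An exponent vector is a multichain if its support is a chain of subsets. -/
def IsChainE {n : ℕ} (e : NES n →₀ ℕ) : Prop :=
  ∀ S ∈ e.support, ∀ T ∈ e.support, S.1 ⊆ T.1 ∨ T.1 ⊆ S.1

/-- `μ(y)`: the multiset of sizes (with multiplicity) of a monomial with exponents `e`. -/
def muE {n : ℕ} (e : NES n →₀ ℕ) : Multiset ℕ :=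
  e.sum fun S m => Multiset.replicate m S.1.card

/-- Sum of the `j` largest entries of a multiset of naturals. -/
def psum (a : Multiset ℕ) (j : ℕ) : ℕ := (((a.sort (· ≤ ·)).reverse).take j).sum

/-- Dominance order on partitions (encoded as multisets) of the same number. -/
def domLE (a b : Multiset ℕ) : Prop := a.sum = b.sum ∧ ∀ j, psum a j ≤ psum b j

/-- Strict dominance order. -/
def domLT (a b : Multiset ℕ) : Prop := domLE a b ∧ a ≠ b

/-- Order on the variables: `y_S > y_T` iff `|S| > |T|`, or `|S| = |T|` and
`min (S \ T) < min (T \ S)`. -/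
def varGt {n : ℕ} (S T : NES n) : Prop :=
  T.1.card < S.1.card ∨
    (S.1.card = T.1.card ∧ ∃ a ∈ S.1 \ T.1, ∀ b ∈ T.1 \ S.1, a < b)

/-- The graded lexicographic order on monomials (exponent vectors) of `ℂ[y_S]`. -/
def monLt {n : ℕ} (e f : NES n →₀ ℕ) : Prop :=
  (e.sum fun _ m => m) < (f.sum fun _ m => m) ∨
    ((e.sum fun _ m => m) = (f.sum fun _ m => m) ∧
      ∃ S, e S < f S ∧ ∀ T, varGt T S → e T = f T)

/-- `e` is the leading monomial of `p`. -/
def IsLM {n : ℕ} (p : YRing n) (e : NES n →₀ ℕ) : Prop :=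
  e ∈ p.support ∧ ∀ f ∈ p.support, f ≠ e → monLt f e

/-- The ideal of leading monomials of nonzero elements of `I`. -/
def LMideal {n : ℕ} (I : Ideal (YRing n)) : Ideal (YRing n) :=
  Ideal.span {q | ∃ p e, p ∈ I ∧ p ≠ 0 ∧ IsLM p e ∧ q = (monomial e 1 : YRing n)}

/-- `e_d(x_1^r, …, x_n^r)`. -/
def esymmR (n r d : ℕ) : XRing n :=
  ∑ t ∈ (univ : Finset (Fin n)).powersetCard d, ∏ i ∈ t, X i ^ r

/-- The ideal `J_{n,k}` of Chan–Rhoades. -/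
def Jx (n k r : ℕ) : Ideal (XRing n) :=
  Ideal.span ({p | ∃ i : Fin n, p = X i ^ (k * r)} ∪
    {p | ∃ d : ℕ, n - k + 1 ≤ d ∧ d ≤ n ∧ p = esymmR n r d})

/-- The ideal `I_{n,k}` of Chan–Rhoades. -/
def Ix (n k r : ℕ) : Ideal (XRing n) :=
  Ideal.span ({p | ∃ i : Fin n, p = X i ^ (k * r + 1)} ∪
    {p | ∃ d : ℕ, n - k + 1 ≤ d ∧ d ≤ n ∧ p = esymmR n r d})

lemma Yv_ne_zero {n : ℕ} (F : Finset (Fin n)) : Yv F ≠ 0 := by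
  unfold Yv
  split
  · exact X_ne_zero _
  · exact one_ne_zero

lemma isHomogeneous_Yv_pow {n : ℕ} {F : Finset (Fin n)} (hF : F.Nonempty) (d : ℕ) :
    (Yv F ^ d).IsHomogeneous d := by
  rw [Yv, dif_pos hF]
  exact isHomogeneous_X_pow _ d

section CWord

variable {n r m : ℕ} (w : CWord n r m)

lemma pref_nonempty (hm : 0 < m) {t : ℕ} (ht : 0 < t) : (pref w t).Nonempty :=
  ⟨w.letter ⟨0, hm⟩, by simpa [pref] using ⟨⟨0, hm⟩, ht, rfl⟩⟩

lemma isHomogeneous_btw (hm : 0 < m) : (btw w).IsHomogeneous (∑ i, mExp w i) :=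
  IsHomogeneous.prod _ _ _ fun i _ =>
    isHomogeneous_Yv_pow (pref_nonempty w hm i.succ_pos) _

lemma isHomogeneous_prod_Yv_pref_pow (hm : 0 < m) {lam : List ℕ} (hpos : ∀ p ∈ lam, 1 ≤ p) :
    (lam.map fun p => Yv (pref w p) ^ r).prod.IsHomogeneous (r * lam.length) := by
  induction lam with
  | nil => simpa using isHomogeneous_one _ ℂ
  | cons p lam ih =>
    rw [List.map_cons, List.prod_cons, List.length_cons, mul_add_one, add_comm]
    exact (isHomogeneous_Yv_pow (pref_nonempty w hm (hpos p List.mem_cons_self)) r).mul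
      (ih fun q hq => hpos q (List.mem_cons_of_mem p hq))

lemma btl_ne_zero (lam : List ℕ) : btl w lam ≠ 0 := by
  refine mul_ne_zero (prod_ne_zero_iff.mpr fun i _ => pow_ne_zero _ (Yv_ne_zero _)) ?_
  exact List.prod_ne_zero (by simp [Yv_ne_zero])

lemma totalDegree_btl_eq (hm : 0 < m) {lam : List ℕ} (hpos : ∀ p ∈ lam, 1 ≤ p) :
    (btl w lam).totalDegree = ∑ i, mExp w i + r * lam.length :=
  ((isHomogeneous_btw w hm).mul (isHomogeneous_prod_Yv_pref_pow w hm hpos)).totalDegree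
    (btl_ne_zero w lam)

def colorAt (t : ℕ) : ℕ := if h : t < m then w.color ⟨t, h⟩ else 0

lemma colorAt_le (t : ℕ) : colorAt w t ≤ r := by
  unfold colorAt
  split
  · exact (Fin.is_lt _).le
  · exact Nat.zero_le r

lemma colorAt_succ_le_of_notMem_desSet {i : Fin m} (hi : i ∉ DesSet w) :
    colorAt w (i + 1) ≤ colorAt w i := by
  unfold colorAt
  split
  case isFalse => exact Nat.zero_le _
  case isTrue h =>
    rw [dif_pos i.isLt]
    have hnlt : ¬ colLt (w.letter ⟨i + 1, h⟩, w.color ⟨i + 1, h⟩) (w.letter i, w.color i) :=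
      fun hlt => hi (by simpa [DesSet] using ⟨⟨i + 1, h⟩, rfl, hlt⟩)
    exact Fin.le_iff_val_le_val.mp (not_lt.mp fun hc => hnlt (Or.inl hc))

lemma mExp_cast (i : Fin m) :
    (mExp w i : ℤ) = colorAt w i - colorAt w (i + 1) + if i ∈ DesSet w then (r : ℤ) else 0 := by
  have hnext : (colorAt w (i + 1) : ℤ) =
      if h : (i : ℕ) + 1 < m then (w.color ⟨i + 1, h⟩ : ℤ) else 0 := by
    unfold colorAt; split <;> rfl
  have hcur : (colorAt w i : ℤ) = w.color i := by simp [colorAt]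
  rw [mExp, ← hnext, ← hcur, Int.toNat_of_nonneg]
  split
  · have := colorAt_le w (i + 1); omega
  · have := colorAt_succ_le_of_notMem_desSet w ‹_›; omega

lemma sum_mExp (hm : 0 < m) : ∑ i, mExp w i = (w.color ⟨0, hm⟩ : ℕ) + r * desNum w := by
  have htel : ∑ i : Fin m, ((colorAt w i : ℤ) - colorAt w (i + 1)) = colorAt w 0 - colorAt w m :=
    (Fin.sum_univ_eq_sum_range (fun t => (colorAt w t : ℤ) - colorAt w (t + 1)) m).trans
      (sum_range_sub' _ m)
  have hdes : ∑ i : Fin m, (if i ∈ DesSet w then (r : ℤ) else 0) = r * desNum w := by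
    rw [sum_ite_mem, univ_inter, sum_const, desNum, nsmul_eq_mul, mul_comm]
  zify
  simp only [mExp_cast, sum_add_distrib, htel, hdes]
  simp [colorAt, hm]

end CWord

lemma add_mul_lt_mul_iff {c r L k : ℕ} (hc : c < r) : c + r * L < k * r ↔ L + 1 ≤ k := by
  constructor
  · intro h
    have := Nat.lt_of_mul_lt_mul_left (by nlinarith : r * L < r * k)
    omega
  · intro h
    nlinarith

theorem totalDegree_btl_general (n k r : ℕ) (hn : 0 < n)
    (g : CPerm n r) (lam : List ℕ)
    (hpos : ∀ p ∈ lam, 1 ≤ p) :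
    (btl g lam).totalDegree = (g.color ⟨0, hn⟩ : ℕ) + r * (lam.length + desNum g) ∧
    ((btl g lam).totalDegree < k * r ↔ lam.length + desNum g + 1 ≤ k) := by
  have hdeg : (btl g lam).totalDegree = (g.color ⟨0, hn⟩ : ℕ) + r * (lam.length + desNum g) := by
    rw [totalDegree_btl_eq g hn hpos, sum_mExp g hn]
    ring
  exact ⟨hdeg, hdeg ▸ add_mul_lt_mul_iff (g.color ⟨0, hn⟩).isLt⟩

/-- For `g ∈ G_n` and a partition `λ` with `m` parts, each at most `n - k`,
the total degree of `b̃_{(g,λ)}` equals `c_1 + r·(m + des(g))`; consequently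
`deg b̃_{(g,λ)} < kr` if and only if `m ≤ k - des(g) - 1`. -/
theorem totalDegree_btl (n k r : ℕ) (hr : 1 ≤ r) (hn : 0 < n) (hk : k ≤ n)
    (g : CPerm n r) (lam : List ℕ) (hsort : lam.Pairwise (· ≥ ·))
    (hpos : ∀ p ∈ lam, 1 ≤ p) (hle : ∀ p ∈ lam, p ≤ n - k) :
    (btl g lam).totalDegree = (g.color ⟨0, hn⟩ : ℕ) + r * (lam.length + desNum g) ∧
    ((btl g lam).totalDegree < k * r ↔ lam.length + desNum g + 1 ≤ k) :=
  totalDegree_btl_general n k r hn g lam hpos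

end
end

section
/- A monomial y of ℂ[y_S] belongs to the set {b̃_{(g,λ)} : (g,λ) ∈ OP_{n,k}} if and only if y is divisible by none of the following monomials: (1) y_S·y_T for nonempty S, T ⊆ [n] with S ⊄ T and T ⊄ S; (2) y_{[m]}^r for m ≥ n−k+1; (3) y_S^{r+1} for |S| ≥ n−k+1; (4) y_S^r·y_T for S ⊊ T, |S| ≥ n−k+1 and min(T∖S) > max(S); (5) y_S·y_T^r for S ⊊ T, |T| ≥ n−k+1 and T = S ∪ [ℓ] for some ℓ; (6) y_{S_1}·y_{S_2}^r·y_{S_3} for S_1 ⊊ S_2 ⊊ S_3, |S_2| ≥ n−k+1 and max(S_2∖S_1) < min(S_3∖S_2); (7) y_{S_1}⋯y_{S_{kr}} for multichains ∅ ≠ S_1 ⊆ ⋯ ⊆ S_{kr} of nonempty subsets of [n]. -/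
open scoped Classical
open MvPolynomial Finset

noncomputable section

/-!
Write `y = ∏ y_S ^ E_S`. The exponent vector of `b̃_{(g,λ)}` lives on the chain of prefixes
`T_1 ⊂ ⋯ ⊂ T_n` of `g`, with exponent `m_i + r · #{j | λ_j = i}` at `T_i`; here `0 ≤ m_i ≤ r`, and
`m_i = r` exactly at a descent between equal colors, i.e. where `π_{i+1} < π_i`. Its degree is
`c_1 + r (des g + ℓ(λ)) < k r`. This rules out all seven divisors.

Conversely, avoiding (1) makes the support of `E` a chain and avoiding (7) bounds its degree by
`k r`. Listing the letters block by block along the chain, increasingly inside each block, and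
coloring position `j` by `Σ_{|T| > j} E_T mod r` gives a colored permutation `g` with
`m_i ≡ E_{T_i} (mod r)`, and `λ` records the quotients `(E_{T_i} - m_i) / r`. A part of `λ` above
`n - k` would give a big `T_i` with `E_{T_i} = r` and `π_i < π_{i+1}`: the new letters of `T_i`
all lie below the new letters of the next set of the chain. According to which neighbours `T_i`
has in the chain, this is one of the divisors (2), (4), (5), (6), while (3) excludes larger
exponents.
-/

section Monomials

variable {σ R : Type*} [CommSemiring R] [Nontrivial R] {E : σ →₀ ℕ}

lemma monomial_one_dvd_monomial_one_iff {d : σ →₀ ℕ} :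
    (monomial d 1 : MvPolynomial σ R) ∣ monomial E 1 ↔ d ≤ E := by
  simp [monomial_dvd_monomial]

lemma X_pow_dvd_monomial_one_iff {S : σ} {a : ℕ} :
    (X S ^ a : MvPolynomial σ R) ∣ monomial E 1 ↔ a ≤ E S := by
  rw [X_pow_eq_monomial, monomial_one_dvd_monomial_one_iff, Finsupp.single_le_iff]

lemma X_dvd_monomial_one_iff {S : σ} : (X S : MvPolynomial σ R) ∣ monomial E 1 ↔ 1 ≤ E S := by
  rw [← X_pow_dvd_monomial_one_iff (R := R), pow_one]

lemma X_pow_mul_X_pow_dvd_monomial_one_iff {S T : σ} (hST : S ≠ T) {a b : ℕ} :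
    (X S ^ a * X T ^ b : MvPolynomial σ R) ∣ monomial E 1 ↔ a ≤ E S ∧ b ≤ E T := by
  rw [X_pow_eq_monomial, X_pow_eq_monomial, monomial_mul, one_mul,
    monomial_one_dvd_monomial_one_iff, Finsupp.le_def]
  refine ⟨fun h => ⟨by simpa [hST] using h S, by simpa [hST.symm] using h T⟩, ?_⟩
  rintro ⟨hS, hT⟩ U
  simp only [Finsupp.add_apply, Finsupp.single_apply]
  split_ifs <;> subst_vars <;> simp_all

lemma X_mul_X_pow_mul_X_dvd_monomial_one_iff {S₁ S₂ S₃ : σ} (h₁₂ : S₁ ≠ S₂) (h₁₃ : S₁ ≠ S₃)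
    (h₂₃ : S₂ ≠ S₃) {a : ℕ} :
    (X S₁ * X S₂ ^ a * X S₃ : MvPolynomial σ R) ∣ monomial E 1 ↔
      1 ≤ E S₁ ∧ a ≤ E S₂ ∧ 1 ≤ E S₃ := by
  rw [← pow_one (X S₁), ← pow_one (X S₃), X_pow_eq_monomial, X_pow_eq_monomial,
    X_pow_eq_monomial, monomial_mul, monomial_mul, one_mul, one_mul,
    monomial_one_dvd_monomial_one_iff, Finsupp.le_def]
  refine ⟨fun h => ⟨by simpa [h₁₂, h₁₃] using h S₁, by simpa [h₁₂.symm, h₂₃] using h S₂,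
    by simpa [h₁₃.symm, h₂₃.symm] using h S₃⟩, ?_⟩
  rintro ⟨h₁, h₂, h₃⟩ U
  simp only [Finsupp.add_apply, Finsupp.single_apply]
  split_ifs <;> subst_vars <;> simp_all

lemma prod_X_dvd_monomial_one_iff {ι : Type*} [Fintype ι] (C : ι → σ) :
    (∏ i, X (C i) : MvPolynomial σ R) ∣ monomial E 1 ↔ ∑ i, Finsupp.single (C i) 1 ≤ E := by
  rw [← monomial_one_dvd_monomial_one_iff (R := R), monomial_sum_one]
  simp only [← X_pow_eq_monomial, pow_one]

end Monomials

@[to_additive]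
lemma List.prod_map_eq_prod_pow_count_succ {M : Type*} [CommMonoid M] {m : ℕ} {lam : List ℕ}
    (hlam : ∀ p ∈ lam, 1 ≤ p ∧ p ≤ m) (f : ℕ → M) :
    (lam.map f).prod = ∏ i : Fin m, f ((i : ℕ) + 1) ^ lam.count ((i : ℕ) + 1) := by
  rw [prod_list_map_count, ← prod_image (f := fun p => f p ^ lam.count p)
    (fun i _ j _ h => Fin.ext (by simpa using h))]
  refine prod_subset (fun p hp => ?_) (fun p _ hp => ?_)
  · obtain ⟨h1, h2⟩ := hlam p (List.mem_toFinset.1 hp)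
    exact mem_image.2 ⟨⟨p - 1, by omega⟩, mem_univ _, by simp; omega⟩
  · rw [List.count_eq_zero_of_not_mem (mt List.mem_toFinset.2 hp), pow_zero]

lemma Tuple.image_sort_filter_lt_card {n : ℕ} {α : Type*} [LinearOrder α] {f : Fin n → α}
    {A : Finset (Fin n)} (hA : ∀ a ∈ A, ∀ b ∉ A, f a < f b) :
    (univ.filter fun l : Fin n => (l : ℕ) < #A).image (Tuple.sort f) = A := by
  have hcard : ∀ t ≤ n, #((univ.filter fun l : Fin n => (l : ℕ) < t).image (Tuple.sort f)) = t :=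
    fun t ht => by
      rw [card_image_of_injective _ (Tuple.sort f).injective, Fin.card_filter_val_lt,
        min_eq_right ht]
  have hAn : #A ≤ n := by simpa using card_le_univ A
  refine eq_of_subset_of_card_le (fun a ha => ?_) (hcard _ hAn).ge
  obtain ⟨l, hl, rfl⟩ := mem_image.1 ha
  by_contra hlA
  have hsub : A ⊆ (univ.filter fun j : Fin n => (j : ℕ) < l).image (Tuple.sort f) := by
    intro a haA
    refine mem_image.2 ⟨(Tuple.sort f).symm a, mem_filter.2 ⟨mem_univ _, ?_⟩, by simp⟩
    by_contra hle
    have := Tuple.monotone_sort f (Fin.le_def.2 (not_lt.1 hle))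
    simp only [Function.comp_apply, Equiv.apply_symm_apply] at this
    exact (hA a haA _ hlA).not_ge this
  have := card_le_card hsub
  rw [hcard l l.isLt.le] at this
  simp at hl
  omega

lemma Nat.le_and_dvd_sub_of_modEq {m e r : ℕ} (hm : m ≤ r) (hme : m ≡ e [MOD r])
    (hpos : m = r → 0 < e) : m ≤ e ∧ r ∣ e - m := by
  rcases hm.lt_or_eq with hlt | rfl
  · have he : m = e % r := (Nat.mod_eq_of_lt hlt).symm.trans hme
    exact ⟨he ▸ Nat.mod_le e r, he ▸ Nat.dvd_sub_mod e⟩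
  · have hdvd : m ∣ e := Nat.dvd_of_mod_eq_zero (Eq.trans hme.symm (Nat.mod_self m))
    exact ⟨Nat.le_of_dvd (hpos rfl) hdvd, Nat.dvd_sub hdvd dvd_rfl⟩

section Forbidden

variable {n : ℕ}

-- The seven families of forbidden divisors, in the order (1)–(7) of the statement.

def AvoidsIncomparable (y : YRing n) : Prop :=
  ¬ ∃ S T : NES n, ¬ S.1 ⊆ T.1 ∧ ¬ T.1 ⊆ S.1 ∧ X S * X T ∣ y

def AvoidsInitialSegmentPow (k r : ℕ) (y : YRing n) : Prop :=
  ¬ ∃ m : ℕ, n - k + 1 ≤ m ∧ m ≤ n ∧ Yv (univ.filter fun j : Fin n => (j : ℕ) < m) ^ r ∣ y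

def AvoidsBigPowSucc (k r : ℕ) (y : YRing n) : Prop :=
  ¬ ∃ S : NES n, n - k + 1 ≤ S.1.card ∧ X S ^ (r + 1) ∣ y

def AvoidsBigPowAscending (k r : ℕ) (y : YRing n) : Prop :=
  ¬ ∃ S T : NES n, S.1 ⊂ T.1 ∧ n - k + 1 ≤ S.1.card ∧
    (∀ a ∈ T.1 \ S.1, ∀ b ∈ S.1, b < a) ∧ X S ^ r * X T ∣ y

def AvoidsPowInitialExtension (k r : ℕ) (y : YRing n) : Prop :=
  ¬ ∃ S T : NES n, S.1 ⊂ T.1 ∧ n - k + 1 ≤ T.1.card ∧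
    (∃ l : ℕ, T.1 = S.1 ∪ univ.filter fun j : Fin n => (j : ℕ) < l) ∧ X S * X T ^ r ∣ y

def AvoidsBigPowGap (k r : ℕ) (y : YRing n) : Prop :=
  ¬ ∃ S₁ S₂ S₃ : NES n, S₁.1 ⊂ S₂.1 ∧ S₂.1 ⊂ S₃.1 ∧ n - k + 1 ≤ S₂.1.card ∧
    (∀ a ∈ S₂.1 \ S₁.1, ∀ b ∈ S₃.1 \ S₂.1, a < b) ∧ X S₁ * X S₂ ^ r * X S₃ ∣ y

def AvoidsMultichain (k r : ℕ) (y : YRing n) : Prop :=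
  ¬ ∃ C : Fin (k * r) → NES n, (∀ i j : Fin (k * r), i ≤ j → (C i).1 ⊆ (C j).1) ∧
    (∏ i, X (C i)) ∣ y

end Forbidden

namespace CWord

variable {n r m : ℕ} (w : CWord n r m)

lemma mem_pref_iff {a : Fin n} {t : ℕ} :
    a ∈ pref w t ↔ ∃ l : Fin m, (l : ℕ) < t ∧ w.letter l = a := by
  simp [pref]

lemma letter_mem_pref_iff {j : Fin m} {t : ℕ} : w.letter j ∈ pref w t ↔ (j : ℕ) < t := by
  simp [mem_pref_iff, w.inj.eq_iff]

lemma pref_eq_image (t : ℕ) :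
    pref w t = (univ.filter fun l : Fin m => (l : ℕ) < t).image w.letter := by
  ext a
  simp [mem_pref_iff]

lemma card_pref {t : ℕ} (ht : t ≤ m) : #(pref w t) = t := by
  rw [pref_eq_image, card_image_of_injective _ w.inj, Fin.card_filter_val_lt, min_eq_right ht]

lemma pref_mono {t t' : ℕ} (h : t ≤ t') : pref w t ⊆ pref w t' := by
  intro a
  simp only [mem_pref_iff]
  exact fun ⟨l, hl, hla⟩ => ⟨l, hl.trans_le h, hla⟩

/-- The prefix `T_{i+1} = {π_1, …, π_{i+1}}` as a variable index. -/
def prefN (i : Fin m) : NES n :=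
  ⟨pref w (i + 1), w.letter i, (w.letter_mem_pref_iff).2 (Nat.lt_succ_self _)⟩

lemma card_prefN (i : Fin m) : #(w.prefN i).1 = i + 1 := w.card_pref i.isLt

lemma letter_mem_prefN_iff {i j : Fin m} : w.letter j ∈ (w.prefN i).1 ↔ j ≤ i := by
  rw [prefN, letter_mem_pref_iff, Nat.lt_succ_iff, Fin.le_def]

lemma letter_mem_prefN_self (i : Fin m) : w.letter i ∈ (w.prefN i).1 :=
  w.letter_mem_prefN_iff.2 le_rfl

lemma letter_succ_notMem_prefN {i : Fin m} (h : (i : ℕ) + 1 < m) :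
    w.letter ⟨i + 1, h⟩ ∉ (w.prefN i).1 := by
  simp [letter_mem_prefN_iff, Fin.le_def]

lemma prefN_subset_or_subset (i j : Fin m) :
    (w.prefN i).1 ⊆ (w.prefN j).1 ∨ (w.prefN j).1 ⊆ (w.prefN i).1 :=
  (le_total i j).imp (fun h => w.pref_mono (by simpa using h))
    (fun h => w.pref_mono (by simpa using h))

lemma lt_of_prefN_ssubset {i j : Fin m} (h : (w.prefN i).1 ⊂ (w.prefN j).1) : i < j := by
  have := card_lt_card h
  rw [card_prefN, card_prefN] at this
  exact Fin.lt_def.2 (by omega)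

lemma Yv_pref_succ (i : Fin m) : Yv (pref w (i + 1)) = X (w.prefN i) :=
  dif_pos (w.prefN i).2

/-- The color `c_{t+1}` (0-indexed), extended by `0` past the end of the word. -/
def colorAt (t : ℕ) : ℕ := if h : t < m then w.color ⟨t, h⟩ else 0

lemma colorAt_of_lt {t : ℕ} (h : t < m) : w.colorAt t = w.color ⟨t, h⟩ := dif_pos h

lemma colorAt_of_not_lt {t : ℕ} (h : ¬ t < m) : w.colorAt t = 0 := dif_neg h

lemma colorAt_lt (t : ℕ) (hr : 0 < r) : w.colorAt t < r := by
  unfold colorAt; split_ifs <;> simp [hr]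

lemma mem_DesSet_iff {i : Fin m} (h : (i : ℕ) + 1 < m) :
    i ∈ DesSet w ↔ w.color i < w.color ⟨i + 1, h⟩ ∨
      (w.color i = w.color ⟨i + 1, h⟩ ∧ w.letter ⟨i + 1, h⟩ < w.letter i) := by
  unfold DesSet
  rw [Finset.mem_filter]
  constructor
  · rintro ⟨-, j, hj, hc⟩
    obtain rfl : j = ⟨i + 1, h⟩ := Fin.ext hj
    unfold colLt at hc
    exact hc.imp_right fun h => ⟨h.1.symm, h.2⟩
  · exact fun hc => ⟨mem_univ i, ⟨i + 1, h⟩, rfl, hc.imp_right fun h => ⟨h.1.symm, h.2⟩⟩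

lemma notMem_DesSet {i : Fin m} (h : ¬ (i : ℕ) + 1 < m) : i ∉ DesSet w := by
  unfold DesSet
  rw [Finset.mem_filter, not_and, not_exists]
  exact fun _ j hj => absurd (hj.1 ▸ j.isLt) h

lemma color_le_color_succ {i : Fin m} (h : (i : ℕ) + 1 < m) (hd : i ∈ DesSet w) :
    (w.color i : ℕ) ≤ w.color ⟨i + 1, h⟩ := by
  rcases (w.mem_DesSet_iff h).1 hd with hc | ⟨hc, -⟩
  · exact hc.le
  · rw [hc]

lemma color_succ_le_color {i : Fin m} (h : (i : ℕ) + 1 < m) (hd : i ∉ DesSet w) :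
    (w.color ⟨i + 1, h⟩ : ℕ) ≤ w.color i := by
  rw [w.mem_DesSet_iff h, not_or, not_lt] at hd
  exact hd.1

/-- The integer truncated in `mExp` is never negative: the colors weakly increase at a descent
and weakly decrease elsewhere. -/
lemma cast_mExp (i : Fin m) :
    (mExp w i : ℤ) = w.colorAt i - w.colorAt (i + 1) + if i ∈ DesSet w then (r : ℤ) else 0 := by
  have hi : w.colorAt i = w.color i := w.colorAt_of_lt i.isLt
  by_cases h : (i : ℕ) + 1 < m
  · have hs := w.colorAt_of_lt h
    have hc := (w.color ⟨i + 1, h⟩).isLt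
    rw [mExp, dif_pos h, Int.toNat_of_nonneg, hi, hs]
    split_ifs with hd
    · have := w.color_le_color_succ h hd
      omega
    · have := w.color_succ_le_color h hd
      omega
  · rw [mExp, dif_neg h, if_neg (w.notMem_DesSet h), hi, w.colorAt_of_not_lt h]
    simp

lemma mExp_le (i : Fin m) : mExp w i ≤ r := by
  have := cast_mExp w i
  have hi : w.colorAt i = w.color i := w.colorAt_of_lt i.isLt
  have hc := (w.color i).isLt
  by_cases h : (i : ℕ) + 1 < m
  · have hs := w.colorAt_of_lt h
    rw [hi, hs] at this
    split_ifs at this with hd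
    · have := w.color_le_color_succ h hd
      omega
    · omega
  · rw [if_neg (w.notMem_DesSet h), hi, w.colorAt_of_not_lt h] at this
    omega

lemma exists_letter_succ_lt_of_mExp_eq {i : Fin m} (hm : mExp w i = r) :
    ∃ h : (i : ℕ) + 1 < m, w.letter ⟨i + 1, h⟩ < w.letter i := by
  have := cast_mExp w i
  have hi : w.colorAt i = w.color i := w.colorAt_of_lt i.isLt
  have hc := (w.color i).isLt
  by_cases h : (i : ℕ) + 1 < m
  · have hs := w.colorAt_of_lt h
    rw [hi, hs, hm] at this
    split_ifs at this with hd
    · rcases (w.mem_DesSet_iff h).1 hd with hlt | ⟨-, hlt⟩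
      · rw [Fin.lt_def] at hlt
        omega
      · exact ⟨h, hlt⟩
    · omega
  · rw [if_neg (w.notMem_DesSet h), hi, w.colorAt_of_not_lt h, hm] at this
    omega

lemma letter_lt_letter_succ_of_mExp_eq_zero {i : Fin m} (h : (i : ℕ) + 1 < m)
    (hm : mExp w i = 0) : w.letter i < w.letter ⟨i + 1, h⟩ := by
  have := cast_mExp w i
  have hi : w.colorAt i = w.color i := w.colorAt_of_lt i.isLt
  have hs := w.colorAt_of_lt h
  have hc := (w.color ⟨i + 1, h⟩).isLt
  rw [hi, hs, hm] at this
  split_ifs at this with hd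
  · omega
  · rw [w.mem_DesSet_iff h, not_or, not_and, not_lt] at hd
    refine lt_of_le_of_ne (not_lt.1 (hd.2 (Fin.ext (by omega)))) fun he => ?_
    simpa [Fin.ext_iff] using w.inj he

lemma sum_mExp : ∑ i, mExp w i = w.colorAt 0 + r * desNum w := by
  have hm := w.colorAt_of_not_lt (lt_irrefl m)
  zify
  simp only [cast_mExp, sum_add_distrib]
  rw [Fin.sum_univ_eq_sum_range (fun t => (w.colorAt t : ℤ) - w.colorAt (t + 1)),
    sum_range_sub', hm, sum_ite_mem, univ_inter, sum_const, desNum, nsmul_eq_mul]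
  push_cast
  ring

lemma prefN_injective : Function.Injective w.prefN := fun i j h => by
  have := congrArg (fun S : NES n => #S.1) h
  simp only [card_prefN] at this
  exact Fin.ext (by omega)

def btlExp (lam : List ℕ) : NES n →₀ ℕ :=
  ∑ i, Finsupp.single (w.prefN i) (mExp w i + r * lam.count ((i : ℕ) + 1))

lemma btlExp_prefN (lam : List ℕ) (i : Fin m) :
    w.btlExp lam (w.prefN i) = mExp w i + r * lam.count ((i : ℕ) + 1) := by
  rw [btlExp, Finsupp.finsetSum_apply, sum_eq_single i (fun j _ hj => ?_) (by simp)]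
  · simp
  · exact Finsupp.single_eq_of_ne (w.prefN_injective.ne hj).symm

lemma exists_eq_prefN_of_btlExp_ne_zero {lam : List ℕ} {S : NES n} (h : w.btlExp lam S ≠ 0) :
    ∃ i, S = w.prefN i := by
  by_contra! hS
  refine h ?_
  rw [btlExp, Finsupp.finsetSum_apply]
  exact sum_eq_zero fun i _ => Finsupp.single_eq_of_ne (hS i)

lemma exists_eq_prefN_of_X_dvd {lam : List ℕ} {S : NES n}
    (h : (X S : YRing n) ∣ monomial (w.btlExp lam) 1) : ∃ i, S = w.prefN i :=
  w.exists_eq_prefN_of_btlExp_ne_zero (Nat.one_le_iff_ne_zero.1 (X_dvd_monomial_one_iff.1 h))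

lemma btl_eq_monomial {lam : List ℕ} (hlam : ∀ p ∈ lam, 1 ≤ p ∧ p ≤ m) :
    btl w lam = monomial (w.btlExp lam) 1 := by
  unfold btl _root_.btw
  rw [List.prod_map_eq_prod_pow_count_succ hlam, ← prod_mul_distrib, btlExp,
    monomial_sum_one]
  refine prod_congr rfl fun i _ => ?_
  rw [← X_pow_eq_monomial, ← pow_mul, Yv_pref_succ, ← pow_add]

lemma degree_btlExp {lam : List ℕ} (hlam : ∀ p ∈ lam, 1 ≤ p ∧ p ≤ m) :
    (w.btlExp lam).degree = w.colorAt 0 + r * (desNum w + lam.length) := by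
  have hlen := List.sum_map_eq_sum_nsmul_count_succ hlam fun _ => 1
  simp only [List.map_const', List.sum_replicate, smul_eq_mul, mul_one] at hlen
  rw [btlExp, map_sum]
  simp only [Finsupp.degree_single, sum_add_distrib, sum_mExp, ← mul_sum, ← hlen]
  ring

end CWord

namespace OPIdx

variable {n k r : ℕ} (o : OPIdx n k r)

lemma lam_bounds : ∀ p ∈ o.lam, 1 ≤ p ∧ p ≤ n :=
  fun p hp => ⟨o.pos p hp, (o.parts_le p hp).trans (Nat.sub_le n k)⟩

lemma btOP_eq_monomial : btOP o = monomial (o.g.btlExp o.lam) 1 :=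
  o.g.btl_eq_monomial o.lam_bounds

lemma btlExp_prefN_of_big {i : Fin n} (hi : n - k + 1 ≤ (i : ℕ) + 1) :
    o.g.btlExp o.lam (o.g.prefN i) = mExp o.g i := by
  rw [CWord.btlExp_prefN, List.count_eq_zero.2 fun h => by have := o.parts_le _ h; omega,
    mul_zero, add_zero]

lemma btlExp_le_of_big {S : NES n} (hS : n - k + 1 ≤ #S.1) : o.g.btlExp o.lam S ≤ r := by
  by_cases h0 : o.g.btlExp o.lam S = 0
  · omega
  obtain ⟨i, rfl⟩ := o.g.exists_eq_prefN_of_btlExp_ne_zero h0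
  rw [CWord.card_prefN] at hS
  rw [o.btlExp_prefN_of_big hS]
  exact o.g.mExp_le i

lemma exists_descent_of_big (hr : 1 ≤ r) {S : NES n} (hS : n - k + 1 ≤ #S.1)
    (hE : r ≤ o.g.btlExp o.lam S) :
    ∃ i : Fin n, ∃ h : (i : ℕ) + 1 < n,
      S = o.g.prefN i ∧ o.g.letter ⟨i + 1, h⟩ < o.g.letter i := by
  obtain ⟨i, rfl⟩ :=
    o.g.exists_eq_prefN_of_btlExp_ne_zero (Nat.one_le_iff_ne_zero.1 (hr.trans hE))
  rw [CWord.card_prefN] at hS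
  rw [o.btlExp_prefN_of_big hS] at hE
  obtain ⟨h, hlt⟩ := o.g.exists_letter_succ_lt_of_mExp_eq (le_antisymm (o.g.mExp_le i) hE)
  exact ⟨i, h, rfl, hlt⟩

lemma degree_btlExp_lt (hr : 1 ≤ r) : (o.g.btlExp o.lam).degree < k * r := by
  rw [o.g.degree_btlExp o.lam_bounds]
  have := o.g.colorAt_lt 0 hr
  have : r * (desNum o.g + o.lam.length) + r ≤ k * r := by
    rw [← Nat.mul_succ, mul_comm k]
    exact Nat.mul_le_mul_left r (by have := o.len; omega)
  omega

lemma avoidsIncomparable_btOP : AvoidsIncomparable (btOP o) := by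
  rintro ⟨S, T, hST, hTS, hd⟩
  rw [btOP_eq_monomial] at hd
  obtain ⟨i, rfl⟩ := o.g.exists_eq_prefN_of_X_dvd (dvd_of_mul_right_dvd hd)
  obtain ⟨j, rfl⟩ := o.g.exists_eq_prefN_of_X_dvd (dvd_of_mul_left_dvd hd)
  exact (o.g.prefN_subset_or_subset i j).elim hST hTS

lemma avoidsInitialSegmentPow_btOP (hr : 1 ≤ r) : AvoidsInitialSegmentPow k r (btOP o) := by
  rintro ⟨m, hm, hmn, hd⟩
  have hF : #(univ.filter fun j : Fin n => (j : ℕ) < m) = m := by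
    rw [Fin.card_filter_val_lt, min_eq_right hmn]
  have hne : (univ.filter fun j : Fin n => (j : ℕ) < m).Nonempty := card_pos.1 (by omega)
  rw [Yv, dif_pos hne, btOP_eq_monomial, X_pow_dvd_monomial_one_iff] at hd
  obtain ⟨i, h, hi, hlt⟩ := o.exists_descent_of_big hr (by rwa [hF]) hd
  have hmem : ∀ a, a ∈ (o.g.prefN i).1 ↔ (a : ℕ) < m := by
    intro a
    rw [← hi]
    simp
  have := (hmem _).1 (o.g.letter_mem_prefN_self i)
  exact o.g.letter_succ_notMem_prefN h ((hmem _).2 (by rw [Fin.lt_def] at hlt; omega))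

lemma avoidsBigPowSucc_btOP : AvoidsBigPowSucc k r (btOP o) := by
  rintro ⟨S, hS, hd⟩
  rw [btOP_eq_monomial, X_pow_dvd_monomial_one_iff] at hd
  have := o.btlExp_le_of_big hS
  omega

lemma avoidsBigPowAscending_btOP (hr : 1 ≤ r) : AvoidsBigPowAscending k r (btOP o) := by
  rintro ⟨S, T, hST, hS, hgap, hd⟩
  rw [btOP_eq_monomial] at hd
  obtain ⟨i, h, rfl, hlt⟩ :=
    o.exists_descent_of_big hr hS (X_pow_dvd_monomial_one_iff.1 (dvd_of_mul_right_dvd hd))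
  obtain ⟨j, rfl⟩ := o.g.exists_eq_prefN_of_X_dvd (dvd_of_mul_left_dvd hd)
  have hij := o.g.lt_of_prefN_ssubset hST
  exact (hgap _ (mem_sdiff.2 ⟨o.g.letter_mem_prefN_iff.2 hij, o.g.letter_succ_notMem_prefN h⟩) _
    (o.g.letter_mem_prefN_self i)).not_gt hlt

lemma avoidsPowInitialExtension_btOP (hr : 1 ≤ r) : AvoidsPowInitialExtension k r (btOP o) := by
  rintro ⟨S, T, hST, hT, ⟨l, hl⟩, hd⟩
  rw [btOP_eq_monomial] at hd
  obtain ⟨i, h, rfl, hlt⟩ :=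
    o.exists_descent_of_big hr hT (X_pow_dvd_monomial_one_iff.1 (dvd_of_mul_left_dvd hd))
  obtain ⟨j, rfl⟩ := o.g.exists_eq_prefN_of_X_dvd (dvd_of_mul_right_dvd hd)
  have hji := o.g.lt_of_prefN_ssubset hST
  have hil : (o.g.letter i : ℕ) < l := by
    have := o.g.letter_mem_prefN_self i
    rw [hl, mem_union, CWord.letter_mem_prefN_iff] at this
    simpa [not_le.2 hji] using this
  refine o.g.letter_succ_notMem_prefN h ?_
  rw [hl, mem_union]
  right
  simp only [mem_filter, mem_univ, true_and]
  rw [Fin.lt_def] at hlt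
  omega

lemma avoidsBigPowGap_btOP (hr : 1 ≤ r) : AvoidsBigPowGap k r (btOP o) := by
  rintro ⟨S₁, S₂, S₃, h₁₂, h₂₃, hS₂, hgap, hd⟩
  rw [btOP_eq_monomial] at hd
  obtain ⟨i, h, rfl, hlt⟩ := o.exists_descent_of_big hr hS₂
    (X_pow_dvd_monomial_one_iff.1 (dvd_of_mul_left_dvd (dvd_of_mul_right_dvd hd)))
  obtain ⟨j₁, rfl⟩ :=
    o.g.exists_eq_prefN_of_X_dvd (dvd_of_mul_right_dvd (dvd_of_mul_right_dvd hd))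
  obtain ⟨j₃, rfl⟩ := o.g.exists_eq_prefN_of_X_dvd (dvd_of_mul_left_dvd hd)
  have h₁ := o.g.lt_of_prefN_ssubset h₁₂
  have h₃ := o.g.lt_of_prefN_ssubset h₂₃
  exact (hgap _
    (mem_sdiff.2 ⟨o.g.letter_mem_prefN_self i, o.g.letter_mem_prefN_iff.not.2 h₁.not_ge⟩) _
    (mem_sdiff.2 ⟨o.g.letter_mem_prefN_iff.2 h₃, o.g.letter_succ_notMem_prefN h⟩)).not_gt hlt

lemma avoidsMultichain_btOP (hr : 1 ≤ r) : AvoidsMultichain k r (btOP o) := by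
  rintro ⟨C, -, hd⟩
  rw [btOP_eq_monomial, prod_X_dvd_monomial_one_iff] at hd
  have := Finsupp.degree_mono hd
  simp only [map_sum, Finsupp.degree_single, sum_const, card_univ, Fintype.card_fin,
    smul_eq_mul, mul_one] at this
  exact (o.degree_btlExp_lt hr).not_ge this

end OPIdx

section Chains

variable {n : ℕ} {E : NES n →₀ ℕ}

lemma IsChainE.exists_lower (hE : IsChainE E) (S : Finset (Fin n)) :
    ∃ P : Finset (Fin n), (P = ∅ ∨ ∃ P' ∈ E.support, P = P'.1 ∧ P'.1 ⊂ S) ∧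
      ∀ T ∈ E.support, T.1 ⊂ S → T.1 ⊆ P := by
  by_cases h : (E.support.filter fun T => T.1 ⊂ S).Nonempty
  · obtain ⟨P, hP, hmax⟩ := exists_max_image _ (fun T : NES n => #T.1) h
    rw [mem_filter] at hP
    refine ⟨P.1, Or.inr ⟨P, hP.1, rfl, hP.2⟩, fun T hT hTS => ?_⟩
    refine (hE T hT P hP.1).elim id fun hPT => ?_
    rw [eq_of_subset_of_card_le hPT (hmax T (mem_filter.2 ⟨hT, hTS⟩))]
  · exact ⟨∅, Or.inl rfl, fun T hT hTS => absurd ⟨T, mem_filter.2 ⟨hT, hTS⟩⟩ h⟩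

lemma IsChainE.exists_upper (hE : IsChainE E) (S : Finset (Fin n)) :
    ∃ Q : Finset (Fin n), (Q = univ ∨ ∃ Q' ∈ E.support, Q = Q'.1 ∧ S ⊂ Q'.1) ∧
      ∀ T ∈ E.support, S ⊂ T.1 → Q ⊆ T.1 := by
  by_cases h : (E.support.filter fun T => S ⊂ T.1).Nonempty
  · obtain ⟨Q, hQ, hmin⟩ := exists_min_image _ (fun T : NES n => #T.1) h
    rw [mem_filter] at hQ
    refine ⟨Q.1, Or.inr ⟨Q, hQ.1, rfl, hQ.2⟩, fun T hT hST => ?_⟩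
    refine (hE T hT Q hQ.1).elim (fun hTQ => ?_) id
    rw [eq_of_subset_of_card_le hTQ (hmin T (mem_filter.2 ⟨hT, hST⟩))]
  · exact ⟨univ, Or.inl rfl, fun T hT hST => absurd ⟨T, mem_filter.2 ⟨hT, hST⟩⟩ h⟩

lemma isChainE_of_avoidsIncomparable (h : AvoidsIncomparable (monomial E 1 : YRing n)) :
    IsChainE E := by
  intro S hS T hT
  by_contra hc
  rw [not_or] at hc
  have hST : S ≠ T := by
    rintro rfl
    exact hc.1 subset_rfl
  refine h ⟨S, T, hc.1, hc.2, ?_⟩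
  rw [← pow_one (X S), ← pow_one (X T), X_pow_mul_X_pow_dvd_monomial_one_iff hST]
  exact ⟨Nat.one_le_iff_ne_zero.2 (Finsupp.mem_support_iff.1 hS),
    Nat.one_le_iff_ne_zero.2 (Finsupp.mem_support_iff.1 hT)⟩

lemma IsChainE.exists_multichain_le (hE : IsChainE E) {d : ℕ} (hd : d ≤ E.degree) :
    ∃ C : Fin d → NES n, (∀ i j, i ≤ j → (C i).1 ⊆ (C j).1) ∧
      ∑ i, Finsupp.single (C i) 1 ≤ E := by
  induction d generalizing E with
  | zero => exact ⟨Fin.elim0, fun i => i.elim0, by simp⟩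
  | succ d ih =>
    have hne : E.support.Nonempty := by
      rw [Finsupp.support_nonempty_iff]
      rintro rfl
      simp at hd
    obtain ⟨S, hS, hmin⟩ := exists_min_image E.support (fun T => #T.1) hne
    have hSsub : ∀ T ∈ E.support, S.1 ⊆ T.1 := fun T hT =>
      (hE S hS T hT).elim id fun hTS => (eq_of_subset_of_card_le hTS (hmin T hT)) ▸ subset_rfl
    have hsplit : Finsupp.single S 1 + (E - Finsupp.single S 1) = E :=
      add_tsub_cancel_of_le (Finsupp.single_le_iff.2
        (Nat.one_le_iff_ne_zero.2 (Finsupp.mem_support_iff.1 hS)))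
    have hsupp : (E - Finsupp.single S 1).support ⊆ E.support := Finsupp.support_mono tsub_le_self
    have hd' : d ≤ (E - Finsupp.single S 1).degree := by
      have := congrArg Finsupp.degree hsplit
      rw [map_add, Finsupp.degree_single] at this
      omega
    obtain ⟨C, hC, hCE⟩ := ih (fun A hA B hB => hE A (hsupp hA) B (hsupp hB)) hd'
    have hCS : ∀ j, S.1 ⊆ (C j).1 := fun j => hSsub _ <| hsupp <| Finsupp.support_mono
      ((single_le_sum (f := fun i => Finsupp.single (C i) 1) (fun _ _ => zero_le)
        (mem_univ j)).trans hCE) (by simp)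
    refine ⟨Fin.cons S C, fun i j hij => ?_, ?_⟩
    · induction i using Fin.cases with
      | zero =>
        induction j using Fin.cases with
        | zero => exact subset_rfl
        | succ j => simpa using hCS j
      | succ i =>
        induction j using Fin.cases with
        | zero => exact absurd hij (Fin.succ_pos i).not_ge
        | succ j => simpa using hC i j (Fin.succ_le_succ_iff.1 hij)
    · rw [Fin.sum_univ_succ, ← hsplit]
      simpa using hCE

lemma degree_lt_of_avoidsMultichain {k r : ℕ} (hE : IsChainE E)
    (h : AvoidsMultichain k r (monomial E 1 : YRing n)) : E.degree < k * r := by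
  by_contra! hd
  obtain ⟨C, hC, hCE⟩ := hE.exists_multichain_le hd
  exact h ⟨C, hC, (prod_X_dvd_monomial_one_iff C).2 hCE⟩

lemma eq_union_filter_lt_of_gap {S P : Finset (Fin n)} (hPS : P ⊆ S) {ℓ : Fin n}
    (hlow : ∀ a ∈ S \ P, a ≤ ℓ) (hup : ∀ b ∉ S, ℓ < b) :
    S = P ∪ univ.filter fun j : Fin n => (j : ℕ) < ℓ + 1 := by
  ext a
  simp only [mem_union, mem_filter, mem_univ, true_and]
  constructor
  · intro ha
    by_cases haP : a ∈ P
    · exact Or.inl haP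
    · have := hlow a (mem_sdiff.2 ⟨ha, haP⟩)
      rw [Fin.le_def] at this
      omega
  · rintro (ha | ha)
    · exact hPS ha
    · by_contra haS
      have := hup a haS
      rw [Fin.lt_def] at this
      omega

/-- `P` and `Q` are the neighbours of `S` in the chain, `∅` and `[n]` standing in for missing
ones. -/
lemma false_of_gap {k r : ℕ} {S : NES n} (hS : n - k + 1 ≤ #S.1) (hES : r ≤ E S)
    {P Q : Finset (Fin n)} (hP : P = ∅ ∨ ∃ P' ∈ E.support, P = P'.1 ∧ P'.1 ⊂ S.1)
    (hQ : Q = univ ∨ ∃ Q' ∈ E.support, Q = Q'.1 ∧ S.1 ⊂ Q'.1)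
    {ℓ : Fin n} (hlow : ∀ a ∈ S.1 \ P, a ≤ ℓ) (hup : ∀ b ∈ Q \ S.1, ℓ < b)
    (h2 : AvoidsInitialSegmentPow k r (monomial E 1 : YRing n))
    (h4 : AvoidsBigPowAscending k r (monomial E 1 : YRing n))
    (h5 : AvoidsPowInitialExtension k r (monomial E 1 : YRing n))
    (h6 : AvoidsBigPowGap k r (monomial E 1 : YRing n)) : False := by
  have hpos : ∀ T ∈ E.support, 1 ≤ E T :=
    fun T hT => Nat.one_le_iff_ne_zero.2 (Finsupp.mem_support_iff.1 hT)
  have hne : ∀ {A B : NES n}, A.1 ⊂ B.1 → A ≠ B := fun h he => h.ne (congrArg Subtype.val he)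
  rcases hQ with rfl | ⟨Q, hQ, rfl, hSQ⟩
  · have hup' : ∀ b ∉ S.1, ℓ < b := fun b hb => hup b (mem_sdiff.2 ⟨mem_univ b, hb⟩)
    rcases hP with rfl | ⟨P, hP, rfl, hPS⟩
    · have hSeq := eq_union_filter_lt_of_gap (empty_subset _) hlow hup'
      rw [empty_union] at hSeq
      have hcard : #S.1 = ℓ + 1 := by
        rw [hSeq, Fin.card_filter_val_lt]
        omega
      refine h2 ⟨ℓ + 1, hcard ▸ hS, ℓ.isLt, ?_⟩
      rw [← hSeq, Yv, dif_pos S.2, X_pow_dvd_monomial_one_iff]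
      exact hES
    · refine h5 ⟨P, S, hPS, hS, ⟨ℓ + 1, eq_union_filter_lt_of_gap hPS.subset hlow hup'⟩, ?_⟩
      rw [← pow_one (X P), X_pow_mul_X_pow_dvd_monomial_one_iff (hne hPS)]
      exact ⟨hpos P hP, hES⟩
  · rcases hP with rfl | ⟨P, hP, rfl, hPS⟩
    · refine h4 ⟨S, Q, hSQ, hS,
        fun a ha b hb => (hlow b (by simpa using hb)).trans_lt (hup a ha), ?_⟩
      rw [← pow_one (X Q), X_pow_mul_X_pow_dvd_monomial_one_iff (hne hSQ)]
      exact ⟨hES, hpos Q hQ⟩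
    · refine h6 ⟨P, S, Q, hPS, hSQ, hS, fun a ha b hb => (hlow a ha).trans_lt (hup b hb), ?_⟩
      rw [X_mul_X_pow_mul_X_dvd_monomial_one_iff (hne hPS) (hne (hPS.trans hSQ)) (hne hSQ)]
      exact ⟨hpos P hP, hES, hpos Q hQ⟩

end Chains

section ChainWord

variable {n r : ℕ} {E : NES n →₀ ℕ}

def missCount (E : NES n →₀ ℕ) (a : Fin n) : ℕ := #(E.support.filter fun T => a ∉ T.1)

def sortKey (E : NES n →₀ ℕ) (a : Fin n) : ℕ ×ₗ Fin n := toLex (missCount E a, a)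

def tailSum (E : NES n →₀ ℕ) (j : ℕ) : ℕ := ∑ T ∈ E.support.filter (fun T => j < #T.1), E T

/-- For a chain `E`, the letters are listed by increasing number of sets of the chain missing
them, so that each set of the chain is a prefix, and increasingly between consecutive sets. The
colors `c_j ≡ Σ_{|T| > j} E_T (mod r)` make `m_j ≡ E_{T_j} (mod r)`. -/
def chainWord (E : NES n →₀ ℕ) (hr : 0 < r) : CPerm n r where
  letter := Tuple.sort (sortKey E)
  inj := (Tuple.sort (sortKey E)).injective
  color j := ⟨tailSum E j % r, Nat.mod_lt _ hr⟩

variable (hr : 0 < r)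

lemma missCount_lt (hE : IsChainE E) {T : NES n} (hT : T ∈ E.support) {a b : Fin n}
    (ha : a ∈ T.1) (hb : b ∉ T.1) : missCount E a < missCount E b := by
  refine card_lt_card ⟨fun T' hT' => ?_, fun hsub => ?_⟩
  · rw [mem_filter] at hT' ⊢
    refine ⟨hT'.1, fun hbT' => ?_⟩
    rcases hE T' hT'.1 T hT with h | h
    · exact hb (h hbT')
    · exact hT'.2 (h ha)
  · exact (mem_filter.1 (hsub (mem_filter.2 ⟨hT, hb⟩))).2 ha

lemma pref_chainWord (hE : IsChainE E) {T : NES n} (hT : T ∈ E.support) :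
    pref (chainWord E hr) #T.1 = T.1 := by
  rw [CWord.pref_eq_image]
  exact Tuple.image_sort_filter_lt_card fun a ha b hb =>
    Prod.Lex.toLex_lt_toLex.2 (Or.inl (missCount_lt hE hT ha hb))

lemma letter_chainWord_mem_iff (hE : IsChainE E) {T : NES n} (hT : T ∈ E.support) (j : Fin n) :
    (chainWord E hr).letter j ∈ T.1 ↔ (j : ℕ) < #T.1 := by
  conv_lhs => rw [← pref_chainWord hr hE hT]
  exact CWord.letter_mem_pref_iff _

lemma eq_prefN_chainWord (hE : IsChainE E) {T : NES n} (hT : T ∈ E.support) {i : Fin n}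
    (hc : #T.1 = i + 1) : T = (chainWord E hr).prefN i :=
  Subtype.ext <| by rw [← pref_chainWord hr hE hT, hc]; rfl

lemma letter_le_letter_chainWord {l j : Fin n} (hlj : l ≤ j)
    (h : ∀ T ∈ E.support, (chainWord E hr).letter l ∈ T.1 ↔ (chainWord E hr).letter j ∈ T.1) :
    (chainWord E hr).letter l ≤ (chainWord E hr).letter j := by
  have hkey := Tuple.monotone_sort (sortKey E) hlj
  have hmiss : missCount E ((chainWord E hr).letter l) = missCount E ((chainWord E hr).letter j) :=
    congrArg card (filter_congr fun T hT => (h T hT).not)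
  simp only [Function.comp_apply, sortKey, Prod.Lex.toLex_le_toLex] at hkey
  exact hkey.elim (fun h' => absurd hmiss h'.ne) (fun h' => h'.2)

lemma le_letter_chainWord_of_mem_sdiff (hE : IsChainE E) {i : Fin n}
    (hS : (chainWord E hr).prefN i ∈ E.support) {P : Finset (Fin n)}
    (hP : ∀ T ∈ E.support, T.1 ⊂ ((chainWord E hr).prefN i).1 → T.1 ⊆ P) {a : Fin n}
    (ha : a ∈ ((chainWord E hr).prefN i).1 \ P) : a ≤ (chainWord E hr).letter i := by
  obtain ⟨haS, haP⟩ := mem_sdiff.1 ha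
  obtain ⟨l, hl, rfl⟩ := (CWord.mem_pref_iff _).1 haS
  refine letter_le_letter_chainWord hr (Fin.le_def.2 (by omega)) fun T hT => ?_
  rcases hE T hT _ hS with hTS | hST
  · rcases LE.le.eq_or_ssubset hTS with hTS | hTS
    · rw [Subtype.ext hTS]
      exact iff_of_true haS (CWord.letter_mem_prefN_self _ i)
    · refine iff_of_false (fun h => haP (hP T hT hTS h)) ?_
      have := card_lt_card hTS
      rw [CWord.card_prefN] at this
      rw [letter_chainWord_mem_iff hr hE hT]
      omega
  · exact iff_of_true (hST haS) (hST (CWord.letter_mem_prefN_self _ i))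

lemma letter_chainWord_lt_of_mem_sdiff (hE : IsChainE E) {i : Fin n}
    (hS : (chainWord E hr).prefN i ∈ E.support) (hm : mExp (chainWord E hr) i = 0)
    {Q : Finset (Fin n)} (hQ : ∀ T ∈ E.support, ((chainWord E hr).prefN i).1 ⊂ T.1 → Q ⊆ T.1)
    {b : Fin n} (hb : b ∈ Q \ ((chainWord E hr).prefN i).1) : (chainWord E hr).letter i < b := by
  obtain ⟨hbQ, hbS⟩ := mem_sdiff.1 hb
  obtain ⟨q, rfl⟩ : ∃ q, (chainWord E hr).letter q = b := (Tuple.sort (sortKey E)).surjective b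
  rw [CWord.letter_mem_prefN_iff, not_le] at hbS
  have h : (i : ℕ) + 1 < n := lt_of_le_of_lt (Fin.lt_def.1 hbS) q.isLt
  refine ((chainWord E hr).letter_lt_letter_succ_of_mExp_eq_zero h hm).trans_le
    (letter_le_letter_chainWord hr (Fin.le_def.2 hbS) fun T hT => ?_)
  rw [letter_chainWord_mem_iff hr hE hT, letter_chainWord_mem_iff hr hE hT]
  rcases hE T hT _ hS with hTS | hST
  · have := card_le_card hTS
    rw [CWord.card_prefN] at this
    simp only
    omega
  · rcases LE.le.eq_or_ssubset hST with hST | hST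
    · rw [← Subtype.ext hST, CWord.card_prefN]
      simp only
      omega
    · have := card_lt_card hST
      rw [CWord.card_prefN] at this
      exact iff_of_true this ((letter_chainWord_mem_iff hr hE hT q).1 (hQ T hT hST hbQ))

lemma letter_lt_letter_succ_chainWord_of_notMem (hE : IsChainE E) {i : Fin n} (h : (i : ℕ) + 1 < n)
    (hS : (chainWord E hr).prefN i ∉ E.support) :
    (chainWord E hr).letter i < (chainWord E hr).letter ⟨i + 1, h⟩ := by
  refine lt_of_le_of_ne (letter_le_letter_chainWord hr (Fin.le_def.2 (by simp)) fun T hT => ?_)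
    fun he => by simpa [Fin.ext_iff] using (chainWord E hr).inj he
  rw [letter_chainWord_mem_iff hr hE hT, letter_chainWord_mem_iff hr hE hT]
  have : #T.1 ≠ i + 1 := fun hc => hS (eq_prefN_chainWord hr hE hT hc ▸ hT)
  simp only
  omega

end ChainWord

section ChainParts

variable {n r : ℕ} {E : NES n →₀ ℕ} (hr : 0 < r)

lemma tailSum_eq_zero {j : ℕ} (hj : n ≤ j) : tailSum E j = 0 :=
  sum_eq_zero fun T hT =>
    absurd (mem_filter.1 hT).2 (not_lt.2 ((card_le_univ T.1).trans (by simpa using hj)))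

lemma colorAt_chainWord (t : ℕ) : (chainWord E hr).colorAt t = tailSum E t % r := by
  unfold CWord.colorAt
  split_ifs with h
  · rfl
  · rw [tailSum_eq_zero (not_lt.1 h), Nat.zero_mod]

lemma tailSum_eq_add (hE : IsChainE E) (i : Fin n) :
    tailSum E i = E ((chainWord E hr).prefN i) + tailSum E (i + 1) := by
  unfold tailSum
  rw [← sum_filter_add_sum_filter_not _ (fun T : NES n => #T.1 = i + 1), filter_filter,
    filter_filter]
  congr 1
  · refine sum_eq_single _ (fun T hT hne => absurd (eq_prefN_chainWord hr hE (mem_filter.1 hT).1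
      (mem_filter.1 hT).2.2) hne) fun hnot => Finsupp.notMem_support_iff.1 fun hS => hnot ?_
    rw [mem_filter, CWord.card_prefN]
    exact ⟨hS, by omega, rfl⟩
  · exact sum_congr (filter_congr fun T _ => by omega) fun _ _ => rfl

lemma mExp_chainWord_modEq (hE : IsChainE E) (i : Fin n) :
    mExp (chainWord E hr) i ≡ E ((chainWord E hr).prefN i) [MOD r] := by
  rw [← Int.natCast_modEq_iff, CWord.cast_mExp, colorAt_chainWord, colorAt_chainWord,
    show (E ((chainWord E hr).prefN i) : ℤ) = tailSum E i - tailSum E (i + 1) by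
      rw [tailSum_eq_add hr hE i]; push_cast; ring]
  push_cast
  refine ((Int.mod_modEq _ _).sub (Int.mod_modEq _ _)).add ?_ |>.trans (by rw [add_zero])
  split_ifs
  · exact Int.modEq_zero_iff_dvd.2 dvd_rfl
  · rfl

lemma mExp_chainWord_le_and_dvd (hE : IsChainE E) (i : Fin n) :
    mExp (chainWord E hr) i ≤ E ((chainWord E hr).prefN i) ∧
      r ∣ E ((chainWord E hr).prefN i) - mExp (chainWord E hr) i := by
  refine Nat.le_and_dvd_sub_of_modEq ((chainWord E hr).mExp_le i)
    (mExp_chainWord_modEq hr hE i) fun hm => Nat.pos_of_ne_zero fun h0 => ?_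
  obtain ⟨h, hlt⟩ := (chainWord E hr).exists_letter_succ_lt_of_mExp_eq hm
  exact (letter_lt_letter_succ_chainWord_of_notMem hr hE h (Finsupp.notMem_support_iff.2 h0)).not_gt hlt

def partCount (E : NES n →₀ ℕ) (hr : 0 < r) (i : Fin n) : ℕ :=
  (E ((chainWord E hr).prefN i) - mExp (chainWord E hr) i) / r

def chainParts (E : NES n →₀ ℕ) (hr : 0 < r) : List ℕ :=
  (∑ i, Multiset.replicate (partCount E hr i) ((i : ℕ) + 1)).sort (· ≥ ·)

lemma count_chainParts (i : Fin n) :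
    (chainParts E hr).count ((i : ℕ) + 1) = partCount E hr i := by
  rw [chainParts, ← Multiset.coe_count, Multiset.sort_eq, Multiset.count_sum',
    sum_eq_single i (fun j _ hj => ?_) (by simp)]
  · simp
  · rw [Multiset.count_replicate, if_neg]
    exact fun h => hj (Fin.ext (by omega)).symm

lemma exists_of_mem_chainParts {p : ℕ} (hp : p ∈ chainParts E hr) :
    ∃ i : Fin n, p = i + 1 ∧ 0 < partCount E hr i := by
  rw [chainParts, Multiset.mem_sort] at hp
  obtain ⟨i, -, hi⟩ := Multiset.mem_sum.1 hp
  rw [Multiset.mem_replicate] at hi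
  exact ⟨i, hi.2, Nat.pos_of_ne_zero hi.1⟩

lemma chainParts_bounds : ∀ p ∈ chainParts E hr, 1 ≤ p ∧ p ≤ n := fun p hp => by
  obtain ⟨i, rfl, -⟩ := exists_of_mem_chainParts hr hp
  omega

lemma btlExp_chainWord (hE : IsChainE E) : (chainWord E hr).btlExp (chainParts E hr) = E := by
  ext S
  by_cases hS : ∃ i, S = (chainWord E hr).prefN i
  · obtain ⟨i, rfl⟩ := hS
    obtain ⟨hle, hdvd⟩ := mExp_chainWord_le_and_dvd hr hE i
    rw [CWord.btlExp_prefN, count_chainParts, partCount, Nat.mul_div_cancel' hdvd]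
    omega
  · have h1 : (chainWord E hr).btlExp (chainParts E hr) S = 0 := by
      by_contra h
      exact hS ((chainWord E hr).exists_eq_prefN_of_btlExp_ne_zero h)
    have h2 : E S = 0 := by
      by_contra h
      have hpos := card_pos.2 S.2
      have hle : #S.1 ≤ n := by simpa using card_le_univ S.1
      exact hS ⟨⟨#S.1 - 1, by omega⟩,
        eq_prefN_chainWord hr hE (Finsupp.mem_support_iff.2 h) (by simp; omega)⟩
    rw [h1, h2]

lemma partCount_eq_zero_of_big (hE : IsChainE E) {k : ℕ}
    (h2 : AvoidsInitialSegmentPow k r (monomial E 1 : YRing n))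
    (h3 : AvoidsBigPowSucc k r (monomial E 1 : YRing n))
    (h4 : AvoidsBigPowAscending k r (monomial E 1 : YRing n))
    (h5 : AvoidsPowInitialExtension k r (monomial E 1 : YRing n))
    (h6 : AvoidsBigPowGap k r (monomial E 1 : YRing n))
    {i : Fin n} (hi : n - k + 1 ≤ (i : ℕ) + 1) : partCount E hr i = 0 := by
  by_contra hpos
  have hcard := (chainWord E hr).card_prefN i
  have hle : E ((chainWord E hr).prefN i) ≤ r := by
    by_contra! h
    exact h3 ⟨_, hcard ▸ hi, X_pow_dvd_monomial_one_iff.2 h⟩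
  have hge : 1 * r ≤ E ((chainWord E hr).prefN i) - mExp (chainWord E hr) i :=
    (Nat.le_div_iff_mul_le hr).1 (Nat.pos_of_ne_zero hpos)
  have hm : mExp (chainWord E hr) i = 0 := by omega
  have hS : (chainWord E hr).prefN i ∈ E.support := Finsupp.mem_support_iff.2 (by omega)
  obtain ⟨P, hP, hPS⟩ := hE.exists_lower ((chainWord E hr).prefN i).1
  obtain ⟨Q, hQ, hSQ⟩ := hE.exists_upper ((chainWord E hr).prefN i).1
  exact false_of_gap (hcard ▸ hi) (by omega) hP hQ
    (fun _ => le_letter_chainWord_of_mem_sdiff hr hE hS hPS) (fun _ => letter_chainWord_lt_of_mem_sdiff hr hE hS hm hSQ)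
    h2 h4 h5 h6

end ChainParts

theorem exists_btOP_eq_of_avoids {n k r : ℕ} (hr : 1 ≤ r) {E : NES n →₀ ℕ}
    (h1 : AvoidsIncomparable (monomial E 1 : YRing n))
    (h2 : AvoidsInitialSegmentPow k r (monomial E 1 : YRing n))
    (h3 : AvoidsBigPowSucc k r (monomial E 1 : YRing n))
    (h4 : AvoidsBigPowAscending k r (monomial E 1 : YRing n))
    (h5 : AvoidsPowInitialExtension k r (monomial E 1 : YRing n))
    (h6 : AvoidsBigPowGap k r (monomial E 1 : YRing n))
    (h7 : AvoidsMultichain k r (monomial E 1 : YRing n)) :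
    ∃ o : OPIdx n k r, monomial E 1 = btOP o := by
  have hE := isChainE_of_avoidsIncomparable h1
  have hdeg := degree_lt_of_avoidsMultichain hE h7
  rw [← btlExp_chainWord hr hE, (chainWord E hr).degree_btlExp (chainParts_bounds hr)] at hdeg
  have hlen : desNum (chainWord E hr) + (chainParts E hr).length < k :=
    Nat.lt_of_mul_lt_mul_left (a := r) (by rw [mul_comm r k]; omega)
  refine ⟨⟨chainWord E hr, chainParts E hr, Multiset.pairwise_sort _ _,
    fun p hp => (chainParts_bounds hr p hp).1, fun p hp => ?_, by omega⟩, ?_⟩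
  · obtain ⟨i, rfl, hpos⟩ := exists_of_mem_chainParts hr hp
    by_contra! h
    exact hpos.ne' (partCount_eq_zero_of_big hr hE h2 h3 h4 h5 h6 (by omega))
  · rw [btOP, (chainWord E hr).btl_eq_monomial (chainParts_bounds hr), btlExp_chainWord hr hE]

theorem btOP_iff_not_divisible_general (n k r : ℕ) (hr : 1 ≤ r)
    (y : YRing n) (hy : ∃ E : NES n →₀ ℕ, y = monomial E 1) :
    (∃ o : OPIdx n k r, y = btOP o) ↔
      ((¬ ∃ S T : NES n, ¬ S.1 ⊆ T.1 ∧ ¬ T.1 ⊆ S.1 ∧ X S * X T ∣ y) ∧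
       (¬ ∃ m : ℕ, n - k + 1 ≤ m ∧ m ≤ n ∧
          Yv (univ.filter fun j : Fin n => (j : ℕ) < m) ^ r ∣ y) ∧
       (¬ ∃ S : NES n, n - k + 1 ≤ S.1.card ∧ X S ^ (r + 1) ∣ y) ∧
       (¬ ∃ S T : NES n, S.1 ⊂ T.1 ∧ n - k + 1 ≤ S.1.card ∧
          (∀ a ∈ T.1 \ S.1, ∀ b ∈ S.1, b < a) ∧ X S ^ r * X T ∣ y) ∧
       (¬ ∃ S T : NES n, S.1 ⊂ T.1 ∧ n - k + 1 ≤ T.1.card ∧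
          (∃ l : ℕ, T.1 = S.1 ∪ univ.filter fun j : Fin n => (j : ℕ) < l) ∧
          X S * X T ^ r ∣ y) ∧
       (¬ ∃ S₁ S₂ S₃ : NES n, S₁.1 ⊂ S₂.1 ∧ S₂.1 ⊂ S₃.1 ∧ n - k + 1 ≤ S₂.1.card ∧
          (∀ a ∈ S₂.1 \ S₁.1, ∀ b ∈ S₃.1 \ S₂.1, a < b) ∧ X S₁ * X S₂ ^ r * X S₃ ∣ y) ∧
       (¬ ∃ C : Fin (k * r) → NES n, (∀ i j : Fin (k * r), i ≤ j → (C i).1 ⊆ (C j).1) ∧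
          (∏ i, X (C i)) ∣ y)) := by
  obtain ⟨E, rfl⟩ := hy
  constructor
  · rintro ⟨o, ho⟩
    rw [ho]
    exact ⟨o.avoidsIncomparable_btOP, o.avoidsInitialSegmentPow_btOP hr,
      o.avoidsBigPowSucc_btOP, o.avoidsBigPowAscending_btOP hr,
      o.avoidsPowInitialExtension_btOP hr, o.avoidsBigPowGap_btOP hr, o.avoidsMultichain_btOP hr⟩
  · rintro ⟨h1, h2, h3, h4, h5, h6, h7⟩
    exact exists_btOP_eq_of_avoids hr h1 h2 h3 h4 h5 h6 h7

/-- A monomial `y` of `ℂ[y_S]` is of the form `b̃_{(g,λ)}` with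
`(g,λ) ∈ OP_{n,k}` if and only if it is divisible by none of the seven listed monomials. -/
theorem btOP_iff_not_divisible (n k r : ℕ) (hr : 1 ≤ r) (hn : 1 ≤ n) (hk : k ≤ n)
    (y : YRing n) (hy : ∃ E : NES n →₀ ℕ, y = monomial E 1) :
    (∃ o : OPIdx n k r, y = btOP o) ↔
      ((¬ ∃ S T : NES n, ¬ S.1 ⊆ T.1 ∧ ¬ T.1 ⊆ S.1 ∧ X S * X T ∣ y) ∧
       (¬ ∃ m : ℕ, n - k + 1 ≤ m ∧ m ≤ n ∧
          Yv (univ.filter fun j : Fin n => (j : ℕ) < m) ^ r ∣ y) ∧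
       (¬ ∃ S : NES n, n - k + 1 ≤ S.1.card ∧ X S ^ (r + 1) ∣ y) ∧
       (¬ ∃ S T : NES n, S.1 ⊂ T.1 ∧ n - k + 1 ≤ S.1.card ∧
          (∀ a ∈ T.1 \ S.1, ∀ b ∈ S.1, b < a) ∧ X S ^ r * X T ∣ y) ∧
       (¬ ∃ S T : NES n, S.1 ⊂ T.1 ∧ n - k + 1 ≤ T.1.card ∧
          (∃ l : ℕ, T.1 = S.1 ∪ univ.filter fun j : Fin n => (j : ℕ) < l) ∧
          X S * X T ^ r ∣ y) ∧
       (¬ ∃ S₁ S₂ S₃ : NES n, S₁.1 ⊂ S₂.1 ∧ S₂.1 ⊂ S₃.1 ∧ n - k + 1 ≤ S₂.1.card ∧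
          (∀ a ∈ S₂.1 \ S₁.1, ∀ b ∈ S₃.1 \ S₂.1, a < b) ∧ X S₁ * X S₂ ^ r * X S₃ ∣ y) ∧
       (¬ ∃ C : Fin (k * r) → NES n, (∀ i j : Fin (k * r), i ≤ j → (C i).1 ⊆ (C j).1) ∧
          (∏ i, X (C i)) ∣ y)) :=
  btOP_iff_not_divisible_general n k r hr y hy

end
end
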